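/- arXiv:1402.0065 — 3 statements merged into one kernel-verified Lean document; each statement's English description precedes it below -/
import Mathlib

section
/- Let f : ℕ → ℂ and define F(k) = ∑_{i=0}^{k} (k choose i) f(i). Then for all m, n ∈ ℕ, ∑_{i=0}^{n} (n choose i) f(m+i) = ∑_{i=0}^{m} (m choose i) (−1)^{m−i} F(n+i). -/
/-!
With the shift operator `E f (j) = f (j + 1)`, the binomial transform is `F k = ((1 + E)^k f) 0`
and the left-hand side is `(E^m (1 + E)^n f) 0`. Expanding `E^m = ((1 + E) - 1)^m` by the binomial
theorem gives the right-hand side.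
-/

open Finset

section

variable {R : Type*} [CommRing R]

def seqShift : Module.End R (ℕ → R) := LinearMap.funLeft R R (· + 1)

theorem seqShift_pow_apply (k : ℕ) (g : ℕ → R) (j : ℕ) : (seqShift ^ k) g j = g (j + k) := by
  induction k generalizing g with
  | zero => rfl
  | succ k ih =>
    rw [pow_succ, Module.End.mul_apply, ih]
    rfl

theorem one_add_seqShift_pow_apply (n : ℕ) (g : ℕ → R) (j : ℕ) :
    ((1 + seqShift) ^ n) g j = ∑ i ∈ range (n + 1), (n.choose i : R) * g (j + i) := by
  rw [add_comm, (Commute.one_right seqShift).add_pow]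
  simp [LinearMap.sum_apply, Module.End.mul_apply, seqShift_pow_apply, Module.End.natCast_apply,
    mul_comm]

theorem seqShift_pow_eq_sum (m : ℕ) :
    (seqShift : Module.End R (ℕ → R)) ^ m =
      ∑ i ∈ range (m + 1), ((m.choose i : R) * (-1) ^ (m - i)) • (1 + seqShift) ^ i := by
  have hbinom := (Commute.neg_one_right (1 + seqShift : Module.End R (ℕ → R))).add_pow m
  rw [add_neg_cancel_comm] at hbinom
  rw [hbinom]
  refine sum_congr rfl fun i _ => ?_
  rw [Algebra.smul_def, map_mul, map_pow, map_neg, map_one, map_natCast, mul_assoc,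
    ← (((Commute.neg_one_left _).pow_left _).mul_left (Nat.cast_commute _ _)).eq,
    (Nat.cast_commute _ _).eq]

end

theorem gould_quaintance (f F : ℕ → ℂ)
    (hF : ∀ k, F k = ∑ i ∈ Finset.range (k + 1), (k.choose i : ℂ) * f i) (m n : ℕ) :
    ∑ i ∈ Finset.range (n + 1), (n.choose i : ℂ) * f (m + i) =
      ∑ i ∈ Finset.range (m + 1), (m.choose i : ℂ) * (-1 : ℂ) ^ (m - i) * F (n + i) := by
  have hF_eval : ∀ k, F k = ((1 + seqShift) ^ k) f 0 := fun k => by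
    simp [hF, one_add_seqShift_pow_apply]
  calc ∑ i ∈ range (n + 1), (n.choose i : ℂ) * f (m + i)
      = (seqShift ^ m) (((1 + seqShift) ^ n) f) 0 := by
        rw [seqShift_pow_apply, zero_add, one_add_seqShift_pow_apply]
    _ = _ := by
        rw [seqShift_pow_eq_sum]
        simp [LinearMap.sum_apply, ← Module.End.mul_apply, hF_eval, ← pow_add, add_comm]
end

section
/- Let f : ℕ → ℂ with f(0) ≠ 0. Then the symmetric identity (−1)^n ∑_{i=0}^{n} (n choose i) f(m+i) = (−1)^m ∑_{i=0}^{m} (m choose i) f(n+i) holds for all m, n ∈ ℕ if and only if ∑_{i=0}^{k} (k choose i) f(i) = (−1)^k f(k) for all k ∈ ℕ. -/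
/-!
Put `g m n = (-1)^n ∑_{i ≤ n} C(n,i) f(m+i)`. The symmetric identity says `g m n = g n m`, and the
condition on `f` says `g 0 k = g k 0`. Pascal's rule gives `g (m+1) n + g m n + g m (n+1) = 0`,
a recurrence that is unchanged by swapping the two arguments, so symmetry on the boundary row
`m = 0` propagates row by row to all of `ℕ × ℕ`.
-/

open Finset

theorem symm_iff_boundary_symm_of_recurrence {G : Type*} [AddCommGroup G] {g : ℕ → ℕ → G}
    (hg : ∀ m n, g (m + 1) n + g m n + g m (n + 1) = 0) :
    (∀ m n, g m n = g n m) ↔ ∀ k, g 0 k = g k 0 := by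
  refine ⟨fun h k => h 0 k, fun h m => ?_⟩
  induction m with
  | zero => exact h
  | succ m ih =>
    intro n
    have hmn := hg m n
    have hnm := hg n m
    rw [ih n, ih (n + 1), add_assoc] at hmn
    rw [add_comm (g (n + 1) m)] at hnm
    rw [eq_neg_of_add_eq_zero_left hmn, neg_eq_of_add_eq_zero_right hnm]

section BinomialSum

variable {R : Type*} [NonAssocSemiring R]

def binomialSum (f : ℕ → R) (m n : ℕ) : R :=
  ∑ i ∈ range (n + 1), (n.choose i : R) * f (m + i)

theorem binomialSum_succ_right (f : ℕ → R) (m n : ℕ) :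
    binomialSum f m (n + 1) = binomialSum f m n + binomialSum f (m + 1) n := by
  simpa only [binomialSum, add_right_comm m 1, add_assoc m] using
    sum_choose_succ_mul (fun i _ => f (m + i)) n

theorem binomialSum_zero_right (f : ℕ → R) (m : ℕ) : binomialSum f m 0 = f m := by
  simp [binomialSum]

end BinomialSum

theorem neg_one_pow_mul_binomialSum_recurrence {R : Type*} [CommRing R] (f : ℕ → R) (m n : ℕ) :
    (-1) ^ n * binomialSum f (m + 1) n + (-1) ^ n * binomialSum f m n +
      (-1) ^ (n + 1) * binomialSum f m (n + 1) = 0 := by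
  rw [binomialSum_succ_right]
  ring

theorem neg_one_pow_mul_eq_iff_eq_neg_one_pow_mul {R : Type*} [Ring R] (k : ℕ) (a b : R) :
    (-1) ^ k * a = b ↔ a = (-1) ^ k * b := by
  have h : (-1 : R) ^ k * (-1) ^ k = 1 := by rw [← pow_add, ← two_mul, pow_mul, neg_one_sq, one_pow]
  constructor <;> rintro rfl <;> rw [← mul_assoc, h, one_mul]

theorem symmetric_identity_iff_general (f : ℕ → ℂ) :
    (∀ m n : ℕ,
        (-1 : ℂ) ^ n * ∑ i ∈ Finset.range (n + 1), (n.choose i : ℂ) * f (m + i) =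
          (-1 : ℂ) ^ m * ∑ i ∈ Finset.range (m + 1), (m.choose i : ℂ) * f (n + i)) ↔
      (∀ k : ℕ, ∑ i ∈ Finset.range (k + 1), (k.choose i : ℂ) * f i = (-1 : ℂ) ^ k * f k) := by
  have key := symm_iff_boundary_symm_of_recurrence (g := fun m n => (-1) ^ n * binomialSum f m n)
    (neg_one_pow_mul_binomialSum_recurrence f)
  simp only [binomialSum_zero_right, pow_zero, one_mul] at key
  refine key.trans (forall_congr' fun k => ?_)
  simp only [binomialSum, zero_add]
  exact neg_one_pow_mul_eq_iff_eq_neg_one_pow_mul k _ _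

theorem symmetric_identity_iff (f : ℕ → ℂ) (hf : f 0 ≠ 0) :
    (∀ m n : ℕ,
        (-1 : ℂ) ^ n * ∑ i ∈ Finset.range (n + 1), (n.choose i : ℂ) * f (m + i) =
          (-1 : ℂ) ^ m * ∑ i ∈ Finset.range (m + 1), (m.choose i : ℂ) * f (n + i)) ↔
      (∀ k : ℕ, ∑ i ∈ Finset.range (k + 1), (k.choose i : ℂ) * f i = (-1 : ℂ) ^ k * f k) :=
  symmetric_identity_iff_general f
end

section
/- For any f : ℕ → ℂ and s ∈ ℕ, ∑_{i=0}^{s} (s choose i) (−1)^{s−i} B_{s−i} f(i) = ∑_{i=0}^{s} (s choose i) B_{s−i} F(i), where F(i) = ∑_{j=0}^{i} (i choose j) f(j) and B_k is the k-th Bernoulli number. -/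
/-!
Both sides are linear in `f`, so it suffices to compare the coefficients of `f j`. On the right,
the trinomial revision `C(s,i) C(i,j) = C(s,j) C(s-j,i-j)` turns that coefficient into
`C(s,j) ∑ₖ C(s-j,k) B_{s-j-k}`, the Bernoulli polynomial `B_{s-j}(X)` evaluated at `1`, which is
`B'_{s-j} = (-1)^{s-j} B_{s-j}`.
-/

open Finset

theorem sum_range_choose_mul_bernoulli_sub (n : ℕ) :
    ∑ k ∈ range (n + 1), (n.choose k : ℚ) * bernoulli (n - k) = (-1) ^ n * bernoulli n := by
  rw [← bernoulli'_eq_bernoulli, ← Polynomial.bernoulli_eval_one, Polynomial.bernoulli_def,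
    Polynomial.eval_finsetSum]
  simp [mul_comm]

theorem sum_range_choose_mul_choose_mul {R : Type*} [CommSemiring R] (a : ℕ → R) {s j : ℕ}
    (hj : j ≤ s) :
    ∑ i ∈ range (s + 1), (s.choose i : R) * i.choose j * a (s - i) =
      s.choose j * ∑ k ∈ range (s - j + 1), ((s - j).choose k : R) * a (s - j - k) := by
  rw [range_eq_Ico, ← sum_Ico_consecutive _ (Nat.zero_le j) (by omega : j ≤ s + 1),
    sum_eq_zero fun i hi ↦ by simp [Nat.choose_eq_zero_of_lt (mem_Ico.1 hi).2], zero_add,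
    sum_Ico_eq_sum_range, show s + 1 - j = s - j + 1 by omega, mul_sum]
  refine sum_congr rfl fun k _ ↦ ?_
  have h := Nat.choose_mul (n := s) (Nat.le_add_right j k)
  rw [Nat.add_sub_cancel_left] at h
  rw [Nat.sub_sub, ← mul_assoc]
  exact_mod_cast congr($h * a (s - (j + k)))

theorem bernoulli_transform_symmetry (f F : ℕ → ℂ)
    (hF : ∀ i, F i = ∑ j ∈ Finset.range (i + 1), (i.choose j : ℂ) * f j) (s : ℕ) :
    ∑ i ∈ Finset.range (s + 1),
        (s.choose i : ℂ) * (-1 : ℂ) ^ (s - i) * (bernoulli (s - i) : ℂ) * f i =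
      ∑ i ∈ Finset.range (s + 1), (s.choose i : ℂ) * (bernoulli (s - i) : ℂ) * F i := by
  have hF_range : ∀ i ∈ range (s + 1), F i = ∑ j ∈ range (s + 1), (i.choose j : ℂ) * f j := by
    intro i hi
    rw [hF]
    refine sum_subset (range_subset_range.2 (mem_range.1 hi)) fun j _ hj ↦ ?_
    simp [Nat.choose_eq_zero_of_lt (not_lt.1 (mt mem_range.2 hj))]
  have hcoeff : ∀ j ∈ range (s + 1),
      ∑ i ∈ range (s + 1), (s.choose i : ℂ) * i.choose j * bernoulli (s - i) =
        s.choose j * (-1) ^ (s - j) * bernoulli (s - j) := by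
    intro j hj
    rw [sum_range_choose_mul_choose_mul (fun k ↦ (bernoulli k : ℂ))
      (Nat.le_of_lt_succ (mem_range.1 hj)), mul_assoc]
    exact_mod_cast congr(s.choose j * $(sum_range_choose_mul_bernoulli_sub (s - j)))
  calc _ = ∑ j ∈ range (s + 1),
          (∑ i ∈ range (s + 1), (s.choose i : ℂ) * i.choose j * bernoulli (s - i)) * f j :=
        sum_congr rfl fun j hj ↦ by rw [hcoeff j hj]
    _ = _ := by
      simp only [sum_mul]
      rw [sum_comm]
      refine sum_congr rfl fun i hi ↦ ?_
      rw [hF_range i hi, mul_sum]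
      exact sum_congr rfl fun j _ ↦ by ring
end
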